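/- arXiv:2311.04136 — 2 statements merged into one kernel-verified Lean document; each statement's English description precedes it below -/
import Mathlib

section
/- Let S = K[x_1,…,x_n] be a polynomial ring over a field K of prime characteristic p, let I ⊆ S be a proper ideal, and let q = p^e be a power of p. Then Ass(I^{[q]}) = Ass(I), i.e., the associated primes of S/I^{[q]} coincide with the associated primes of S/I. -/
open MvPolynomial

attribute [local instance] MvPolynomial.gradedAlgebra

/- ### Auxiliary development: Frobenius decomposition of polynomial rings ### -/
-- helper : expand of monomial
theorem MvPolynomial.expand_monomial_smul {K : Type*} [CommSemiring K] {n : ℕ} (q : ℕ) (γ : Fin n →₀ ℕ) (c : K) :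
    expand q (monomial γ c) = monomial (q • γ) c := by
  rw [monomial_eq, monomial_eq, map_mul, algHom_C, map_finsuppProd]
  congr 1
  rw [Finsupp.prod, Finsupp.prod_of_support_subset (q • γ) Finsupp.support_smul
      (fun i e => X i ^ e) (fun i _ => pow_zero (X i))]
  exact Finset.prod_congr rfl fun i _ => by
    rw [map_pow, expand_X, Finsupp.smul_apply, smul_eq_mul, pow_mul]

set_option linter.unusedSectionVars false

noncomputable section FPaux

variable {K : Type*} [Field K] {n : ℕ} (p e : ℕ) [Fact p.Prime] [CharP K p]

/-- The subfield of `q`-th powers. -/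
def Kq : Subfield K := (iterateFrobenius K p e).fieldRange

def bIdx : Set K := Module.Basis.ofVectorSpaceIndex (Kq p e (K := K)) K

def bas : Module.Basis (bIdx p e (K := K)) (Kq p e (K := K)) K := Module.Basis.ofVectorSpace _ _

/-- index type for the basis of `S` over `S^q` -/
abbrev Idx (K : Type*) [Field K] (n p e : ℕ) [Fact p.Prime] [CharP K p] : Type _ :=
  {ρ : Fin n →₀ ℕ // ∀ i : Fin n, ρ i < p ^ e} × ↥(bIdx p e (K := K))

lemma qpos : 0 < p ^ e := Nat.pow_pos (Fact.out (p := p.Prime)).pos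

/-- The evaluation map `t ↦ ∑ bⱼ x^ρ (t_{ρ,j})^q`. -/
def Theta : ((Idx K n p e) →₀ MvPolynomial (Fin n) K) →+ MvPolynomial (Fin n) K where
  toFun t := t.sum fun i c => monomial i.1.1 ((bas (K := K) p e i.2 : K)) * c ^ p ^ e
  map_zero' := Finsupp.sum_zero_index
  map_add' t₁ t₂ := by
    exact Finsupp.sum_add_index'
      (fun i => by rw [zero_pow (qpos p e).ne', mul_zero])
      (fun i c₁ c₂ => by rw [add_pow_char_pow, mul_add])

lemma Theta_apply (t : (Idx K n p e) →₀ MvPolynomial (Fin n) K) :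
    Theta p e t = t.sum fun i c => monomial i.1.1 ((bas (K := K) p e i.2 : K)) * c ^ p ^ e :=
  rfl

lemma Theta_single (i : Idx K n p e) (c : MvPolynomial (Fin n) K) :
    Theta p e (Finsupp.single i c) = monomial i.1.1 ((bas (K := K) p e i.2 : K)) * c ^ p ^ e := by
  rw [Theta_apply]
  exact Finsupp.sum_single_index (by rw [zero_pow (qpos p e).ne', mul_zero])

lemma Theta_smul (s : MvPolynomial (Fin n) K) (t : (Idx K n p e) →₀ MvPolynomial (Fin n) K) :
    Theta p e (s • t) = s ^ p ^ e * Theta p e t := by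
  rw [Theta_apply, Theta_apply,
    Finsupp.sum_smul_index' (fun i => by rw [zero_pow (qpos p e).ne', mul_zero]), Finsupp.mul_sum]
  exact Finsupp.sum_congr fun i _ => by rw [smul_eq_mul, mul_pow]; ring

/-- Frobenius on polynomials as expand + coefficientwise Frobenius. -/
lemma pow_q_eq_expand (s : MvPolynomial (Fin n) K) :
    s ^ p ^ e = expand (p ^ e) (map (iterateFrobenius K p e) s) := by
  induction s using MvPolynomial.induction_on' with
  | monomial γ c =>
      rw [monomial_pow, map_monomial, expand_monomial_smul, iterateFrobenius_def]
  | add f g hf hg => rw [add_pow_char_pow, map_add, map_add, hf, hg]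

lemma coeff_expand_smul (h : MvPolynomial (Fin n) K) (γ : Fin n →₀ ℕ) :
    coeff ((p ^ e) • γ) (expand (p ^ e) h) = coeff γ h := by
  classical
  induction h using MvPolynomial.induction_on' with
  | monomial γ' c =>
      rw [expand_monomial_smul, coeff_monomial, coeff_monomial]
      congr 1
      simp only [eq_iff_iff]
      constructor
      · intro hh
        ext i
        have := DFunLike.congr_fun hh i
        simp only [Finsupp.smul_apply, smul_eq_mul] at this
        exact Nat.eq_of_mul_eq_mul_left (qpos p e) this
      · rintro rfl; rfl
  | add f g hf hg => rw [map_add, coeff_add, coeff_add, hf, hg]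

lemma coeff_expand_not_dvd (h : MvPolynomial (Fin n) K) (δ : Fin n →₀ ℕ) (i : Fin n)
    (hi : ¬ (p ^ e ∣ δ i)) : coeff δ (expand (p ^ e) h) = 0 := by
  classical
  induction h using MvPolynomial.induction_on' with
  | monomial γ' c =>
      rw [expand_monomial_smul, coeff_monomial, if_neg]
      rintro rfl
      exact hi ⟨γ' i, by simp [Finsupp.smul_apply, smul_eq_mul]⟩
  | add f g hf hg => rw [map_add, coeff_add, hf, hg, add_zero]

lemma coeff_term (γ : Fin n →₀ ℕ) (ρ ρ' : {ρ : Fin n →₀ ℕ // ∀ i : Fin n, ρ i < p ^ e})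
    (bc : K) (c : MvPolynomial (Fin n) K) :
    coeff ((p ^ e) • γ + ρ.1) (monomial ρ'.1 bc * c ^ p ^ e) =
      if ρ' = ρ then bc * (coeff γ c) ^ p ^ e else 0 := by
  classical
  rw [pow_q_eq_expand, mul_comm, coeff_mul_monomial']
  by_cases hr : ρ' = ρ
  · subst hr
    rw [if_pos (le_add_self), if_pos rfl, add_tsub_cancel_right, _root_.coeff_expand_smul,
      coeff_map, iterateFrobenius_def, mul_comm]
  · rw [if_neg hr]
    by_cases hle : ρ'.1 ≤ (p ^ e) • γ + ρ.1
    · rw [if_pos hle]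
      obtain ⟨i, hi⟩ : ∃ i, ρ'.1 i ≠ ρ.1 i := by
        by_contra hc
        push_neg at hc
        exact hr (Subtype.ext (Finsupp.ext hc))
      rw [coeff_expand_not_dvd p e _ _ i, zero_mul]
      rintro ⟨m, hm⟩
      rw [Finsupp.tsub_apply, Finsupp.coe_add, Pi.add_apply, Finsupp.smul_apply,
        smul_eq_mul] at hm
      have hle' : ρ'.1 i ≤ p ^ e * γ i + ρ.1 i := by
        have := Finsupp.le_def.mp hle i
        simpa [Finsupp.smul_apply, smul_eq_mul] using this
      have heq : p ^ e * m + ρ'.1 i = p ^ e * γ i + ρ.1 i := by omega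
      have h1 : (p ^ e * m + ρ'.1 i) % (p ^ e) = ρ'.1 i := by
        rw [Nat.mul_add_mod, Nat.mod_eq_of_lt (ρ'.2 i)]
      have h2 : (p ^ e * γ i + ρ.1 i) % (p ^ e) = ρ.1 i := by
        rw [Nat.mul_add_mod, Nat.mod_eq_of_lt (ρ.2 i)]
      rw [heq, h2] at h1
      exact hi h1.symm
    · rw [if_neg hle]

lemma Theta_inj : Function.Injective (Theta (K := K) (n := n) p e) := by
  classical
  rw [injective_iff_map_eq_zero]
  intro t ht
  refine Finsupp.ext fun i0 => ?_
  obtain ⟨ρ, j0⟩ := i0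
  by_cases hsupp : (⟨ρ, j0⟩ : Idx K n p e) ∈ t.support
  · refine MvPolynomial.ext _ _ fun γ => ?_
    rw [show (0 : Idx K n p e →₀ MvPolynomial (Fin n) K) (ρ, j0) = 0 from rfl, coeff_zero]
    -- the coefficient of Theta t at q•γ+ρ
    have hcoeff : ∑ i ∈ t.support.filter (fun i => i.1 = ρ),
        (bas (K := K) p e i.2 : K) * (coeff γ (t i)) ^ p ^ e = 0 := by
      have := congrArg (coeff ((p ^ e) • γ + ρ.1)) ht
      rw [Theta_apply, Finsupp.sum, coeff_sum, coeff_zero] at this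
      rw [← this, Finset.sum_filter]
      exact Finset.sum_congr rfl fun i _ => by rw [coeff_term]
    -- rewrite as a sum over the image of snd
    set sfin : Finset ↥(bIdx p e (K := K)) :=
      (t.support.filter (fun i => i.1 = ρ)).image Prod.snd with hsfin
    have himage : ∑ j ∈ sfin,
        ((⟨(coeff γ (t (⟨ρ, j⟩ : Idx K n p e))) ^ p ^ e,
          ⟨coeff γ (t (⟨ρ, j⟩ : Idx K n p e)), (iterateFrobenius_def p e _)⟩⟩ : Kq p e (K := K))
          • (bas (K := K) p e j : K)) = 0 := by
      rw [hsfin, Finset.sum_image ?inj]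
      case inj =>
        intro x hx y hy hxy
        rw [Finset.mem_coe, Finset.mem_filter] at hx hy
        exact Prod.ext (hx.2.trans hy.2.symm) hxy
      rw [← hcoeff]
      refine Finset.sum_congr rfl fun i hi => ?_
      rw [Finset.mem_filter] at hi
      have : (⟨ρ, i.2⟩ : Idx K n p e) = i := Prod.ext hi.2.symm rfl
      rw [this]
      exact (mul_comm _ _)
    have hli := linearIndependent_iff'.mp (bas (K := K) p e).linearIndependent sfin _ himage j0
      (Finset.mem_image.mpr ⟨⟨ρ, j0⟩, Finset.mem_filter.mpr ⟨hsupp, rfl⟩, rfl⟩)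
    have : (coeff γ (t (⟨ρ, j0⟩ : Idx K n p e))) ^ p ^ e = 0 := congrArg Subtype.val hli
    exact pow_eq_zero_iff (qpos p e).ne' |>.mp this
  · exact (Finsupp.notMem_support_iff.mp hsupp).trans rfl

/-- a chosen `q`-th root of an element of `Kq`. -/
def root (x : Kq p e (K := K)) : K := (RingHom.mem_fieldRange.mp x.2).choose

lemma root_spec (x : Kq p e (K := K)) : (root p e x) ^ p ^ e = (x : K) := by
  have := (RingHom.mem_fieldRange.mp x.2).choose_spec
  rwa [iterateFrobenius_def] at this

lemma Theta_surj (g : MvPolynomial (Fin n) K) : ∃ t, Theta (K := K) (n := n) p e t = g := by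
  classical
  induction g using MvPolynomial.induction_on' with
  | add f g hf hg =>
      obtain ⟨t1, ht1⟩ := hf
      obtain ⟨t2, ht2⟩ := hg
      exact ⟨t1 + t2, by rw [map_add, ht1, ht2]⟩
  | monomial β c =>
      set γ : Fin n →₀ ℕ := β.mapRange (· / p ^ e) (Nat.zero_div _) with hγ
      set ρ : Fin n →₀ ℕ := β.mapRange (· % p ^ e) (Nat.zero_mod _) with hρdef
      have hρ : ∀ i : Fin n, ρ i < p ^ e := fun i => by
        rw [hρdef, Finsupp.mapRange_apply]
        exact Nat.mod_lt _ (qpos p e)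
      have hβ : ρ + (p ^ e) • γ = β := by
        refine Finsupp.ext fun i => ?_
        rw [Finsupp.coe_add, Pi.add_apply, Finsupp.smul_apply, smul_eq_mul, hρdef, hγ,
          Finsupp.mapRange_apply, Finsupp.mapRange_apply]
        exact Nat.mod_add_div _ _
      refine ⟨∑ j ∈ ((bas (K := K) p e).repr c).support,
        Finsupp.single (⟨⟨ρ, hρ⟩, j⟩ : Idx K n p e)
          (monomial γ (root p e ((bas (K := K) p e).repr c j))), ?_⟩
      rw [map_sum]
      have : ∀ j ∈ ((bas (K := K) p e).repr c).support,
          Theta (K := K) (n := n) p e (Finsupp.single (⟨⟨ρ, hρ⟩, j⟩ : Idx K n p e)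
            (monomial γ (root p e ((bas (K := K) p e).repr c j)))) =
          monomial β ((bas (K := K) p e j : K) * ((bas (K := K) p e).repr c j : K)) := by
        intro j _
        rw [Theta_single, monomial_pow, root_spec, monomial_mul, hβ]
      rw [Finset.sum_congr rfl this, ← map_sum (monomial β)]
      congr 1
      have := (bas (K := K) p e).linearCombination_repr c
      rw [Finsupp.linearCombination_apply, Finsupp.sum] at this
      refine Eq.trans ?_ this
      exact Finset.sum_congr rfl fun j _ => by
        rw [show ((bas (K := K) p e).repr c j) • (bas (K := K) p e j : K)
          = ((bas (K := K) p e).repr c j : K) * (bas (K := K) p e j : K) from rfl, mul_comm]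

/-- the component family of a polynomial. -/
def comp (g : MvPolynomial (Fin n) K) : (Idx K n p e) →₀ MvPolynomial (Fin n) K :=
  (Theta_surj p e g).choose

lemma comp_spec (g : MvPolynomial (Fin n) K) : Theta (K := K) (n := n) p e (comp p e g) = g :=
  (Theta_surj p e g).choose_spec

lemma comp_unique {g : MvPolynomial (Fin n) K} {t : (Idx K n p e) →₀ MvPolynomial (Fin n) K}
    (h : Theta (K := K) (n := n) p e t = g) : comp p e g = t :=
  Theta_inj p e (by rw [comp_spec, h])

lemma comp_pow_mul (s g : MvPolynomial (Fin n) K) :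
    comp p e (s ^ p ^ e * g) = s • comp p e g :=
  comp_unique p e (by rw [Theta_smul, comp_spec])

def frobPow' (I : Ideal (MvPolynomial (Fin n) K)) (q : ℕ) : Ideal (MvPolynomial (Fin n) K) :=
  Ideal.span ((fun a => a ^ q) '' (I : Set (MvPolynomial (Fin n) K)))

lemma comp_mul_mem (I : Ideal (MvPolynomial (Fin n) K)) (s g : MvPolynomial (Fin n) K)
    (hg : ∀ i, comp p e g i ∈ I) : ∀ i, comp p e (s * g) i ∈ I := by
  have hdecomp : comp p e (s * g) = (comp p e g).sum
      fun (i : Idx K n p e) c => c • comp p e (s * monomial i.1.1 ((bas (K := K) p e i.2 : K))) := by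
    refine comp_unique p e ?_
    rw [map_finsuppSum]
    calc (comp p e g).sum (fun (i : Idx K n p e) c => Theta (K := K) (n := n) p e
            (c • comp p e (s * monomial i.1.1 ((bas (K := K) p e i.2 : K)))))
        = (comp p e g).sum (fun (i : Idx K n p e) c =>
            c ^ p ^ e * (s * monomial i.1.1 ((bas (K := K) p e i.2 : K)))) :=
          Finsupp.sum_congr fun i _ => by rw [Theta_smul, comp_spec]
      _ = s * (comp p e g).sum (fun (i : Idx K n p e) c =>
            monomial i.1.1 ((bas (K := K) p e i.2 : K)) * c ^ p ^ e) := by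
          rw [Finsupp.mul_sum]; exact Finsupp.sum_congr fun i _ => by ring
      _ = s * g := by rw [← Theta_apply, comp_spec]
  intro i'
  rw [hdecomp, Finsupp.sum, Finsupp.finset_sum_apply]
  refine Ideal.sum_mem _ fun i hi => ?_
  rw [Finsupp.smul_apply, smul_eq_mul]
  exact Ideal.mul_mem_right _ _ (hg i)

lemma mem_frobPow_iff (I : Ideal (MvPolynomial (Fin n) K)) (g : MvPolynomial (Fin n) K) :
    g ∈ frobPow' I (p ^ e) ↔ ∀ i, comp p e g i ∈ I := by
  constructor
  · intro hg
    induction hg using Submodule.span_induction with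
    | mem x hx =>
        obtain ⟨a, ha, rfl⟩ := hx
        intro i
        rw [show (fun a => a ^ p ^ e) a = a ^ p ^ e * 1 from (mul_one _).symm, comp_pow_mul,
          Finsupp.smul_apply, smul_eq_mul]
        exact Ideal.mul_mem_right _ _ ha
    | zero => intro i; rw [comp_unique p e (map_zero _)]; exact I.zero_mem
    | add x y hx hy hx' hy' =>
        intro i
        rw [comp_unique p e (g := x + y) (t := comp p e x + comp p e y)
          (by rw [map_add, comp_spec, comp_spec]), Finsupp.add_apply]
        exact I.add_mem (hx' i) (hy' i)
    | smul a x hx hx' =>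
        rw [smul_eq_mul]
        exact comp_mul_mem p e I a x hx'
  · intro h
    rw [← comp_spec p e g, Theta_apply, Finsupp.sum]
    refine Ideal.sum_mem _ fun i _ => ?_
    exact Ideal.mul_mem_left _ _ (Ideal.subset_span ⟨comp p e g i, h i, rfl⟩)

lemma pow_mul_mem_frobPow_iff (I : Ideal (MvPolynomial (Fin n) K))
    (f g : MvPolynomial (Fin n) K) :
    f ^ p ^ e * g ∈ frobPow' I (p ^ e) ↔ ∀ i, f * comp p e g i ∈ I := by
  rw [mem_frobPow_iff, comp_pow_mul]
  exact forall_congr' fun i => by rw [Finsupp.smul_apply, smul_eq_mul]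

lemma ann_mk_eq (I : Ideal (MvPolynomial (Fin n) K)) (f : MvPolynomial (Fin n) K) :
    (⊥ : Submodule (MvPolynomial (Fin n) K) (MvPolynomial (Fin n) K ⧸ I)).colon
      {Ideal.Quotient.mk I f} =
      I.colon (Ideal.span {f}) := by
  ext r
  rw [Submodule.mem_colon_singleton, Submodule.mem_bot, Ideal.mem_colon_span_singleton,
    show r • Ideal.Quotient.mk I f = Ideal.Quotient.mk I (r * f) from rfl,
    Ideal.Quotient.eq_zero_iff_mem]

lemma qpow_split (s : MvPolynomial (Fin n) K) : s ^ p ^ e = s ^ (p ^ e - 1) * s := by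
  rw [← pow_succ, Nat.sub_add_cancel (qpos p e)]

lemma ass_frobPow_subset (I : Ideal (MvPolynomial (Fin n) K)) :
    associatedPrimes (MvPolynomial (Fin n) K) (MvPolynomial (Fin n) K ⧸ frobPow' I (p ^ e)) ⊆
      associatedPrimes (MvPolynomial (Fin n) K) (MvPolynomial (Fin n) K ⧸ I) := by
  classical
  intro P hP0
  obtain ⟨hP, x, hx⟩ := isAssociatedPrime_iff.mp hP0
  obtain ⟨g, rfl⟩ := Ideal.Quotient.mk_surjective x
  rw [ann_mk_eq] at hx
  set t := comp p e g with ht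
  have claim1 : ∀ s, s ∈ P ↔ ∀ i, s * t i ∈ I := by
    intro s
    have hsg : s ∈ P ↔ s * g ∈ frobPow' I (p ^ e) := by rw [hx, Ideal.mem_colon_span_singleton]
    constructor
    · intro hs
      have h1 : s ^ p ^ e * g ∈ frobPow' I (p ^ e) := by
        rw [qpow_split, mul_assoc]
        exact Ideal.mul_mem_left _ _ (hsg.mp hs)
      intro i
      exact (pow_mul_mem_frobPow_iff p e I s g).mp h1 i
    · intro h
      have h1 : s ^ p ^ e * g ∈ frobPow' I (p ^ e) :=
        (pow_mul_mem_frobPow_iff p e I s g).mpr h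
      have h2 : s ^ p ^ e ∈ P := by rw [hx, Ideal.mem_colon_span_singleton]; exact h1
      exact (hP.pow_mem_iff_mem _ (qpos p e)).mp h2
  have hPeq : P = t.support.inf fun i => I.colon (Ideal.span {t i}) := by
    refine le_antisymm (Finset.le_inf fun i _ => fun s hs =>
      Ideal.mem_colon_span_singleton.mpr ((claim1 s).mp hs i)) fun s hs => ?_
    refine (claim1 s).mpr fun i => ?_
    by_cases hi : i ∈ t.support
    · exact Ideal.mem_colon_span_singleton.mp
        (Finset.inf_le (f := fun i => I.colon (Ideal.span {t i})) hi hs)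
    · rw [Finsupp.notMem_support_iff.mp hi, mul_zero]; exact I.zero_mem
  obtain ⟨i, hi, hle⟩ := hP.prod_le.mp (le_trans Ideal.prod_le_inf (le_of_eq hPeq.symm))
  have hfin : P = I.colon (Ideal.span {t i}) :=
    le_antisymm (hPeq ▸ Finset.inf_le hi) hle
  exact isAssociatedPrime_iff.mpr ⟨hP, Ideal.Quotient.mk I (t i), by rw [ann_mk_eq, ← hfin]⟩

lemma ass_frobPow_superset (I : Ideal (MvPolynomial (Fin n) K)) :
    associatedPrimes (MvPolynomial (Fin n) K) (MvPolynomial (Fin n) K ⧸ I) ⊆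
      associatedPrimes (MvPolynomial (Fin n) K)
        (MvPolynomial (Fin n) K ⧸ frobPow' I (p ^ e)) := by
  intro P hP0
  obtain ⟨hP, x, hx⟩ := isAssociatedPrime_iff.mp hP0
  obtain ⟨f, rfl⟩ := Ideal.Quotient.mk_surjective x
  rw [ann_mk_eq] at hx
  have hcolon : (frobPow' I (p ^ e)).colon (Ideal.span {f ^ p ^ e}) = frobPow' P (p ^ e) := by
    ext s
    rw [Ideal.mem_colon_span_singleton, mem_frobPow_iff p e P s, mul_comm,
      pow_mul_mem_frobPow_iff]
    exact forall_congr' fun i => by rw [hx, Ideal.mem_colon_span_singleton, mul_comm]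
  have hle : frobPow' P (p ^ e) ≤ P := by
    rw [frobPow', Ideal.span_le]
    rintro _ ⟨a, ha, rfl⟩
    exact Ideal.pow_mem_of_mem P ha _ (qpos p e)
  have hne : frobPow' P (p ^ e) ≠ ⊤ := fun h => hP.ne_top (top_le_iff.mp (h ▸ hle))
  haveI := Ideal.Quotient.nontrivial_iff.mpr hne
  obtain ⟨P', hP'⟩ := associatedPrimes.nonempty (MvPolynomial (Fin n) K)
    (MvPolynomial (Fin n) K ⧸ frobPow' P (p ^ e))
  -- P' is an associated prime of S/P, hence P' = P
  obtain ⟨hP'p, y, hy⟩ := isAssociatedPrime_iff.mp (ass_frobPow_subset p e P hP')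
  obtain ⟨c, rfl⟩ := Ideal.Quotient.mk_surjective y
  rw [ann_mk_eq] at hy
  have hcP : c ∉ P := by
    intro hcP
    exact hP'p.ne_top (by
      rw [hy, Ideal.eq_top_iff_one, Ideal.mem_colon_span_singleton, one_mul]; exact hcP)
  have hP'P : P' = P := by
    rw [hy]
    ext s
    rw [Ideal.mem_colon_span_singleton]
    exact ⟨fun h => (hP.mem_or_mem h).resolve_right hcP, fun h => P.mul_mem_right _ h⟩
  obtain ⟨hP'pr2, z, hz⟩ := isAssociatedPrime_iff.mp hP'
  obtain ⟨h0, rfl⟩ := Ideal.Quotient.mk_surjective z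
  rw [ann_mk_eq] at hz
  refine isAssociatedPrime_iff.mpr ⟨hP, Ideal.Quotient.mk _ (h0 * f ^ p ^ e), ?_⟩
  rw [ann_mk_eq]
  ext s
  rw [Ideal.mem_colon_span_singleton, show s * (h0 * f ^ p ^ e) = (s * h0) * f ^ p ^ e by ring,
    ← Ideal.mem_colon_span_singleton, hcolon, ← Ideal.mem_colon_span_singleton, ← hz, ← hP'P]

end FPaux


noncomputable section

variable {K : Type*} [Field K] {n : ℕ}

/-- The `q`-th Frobenius power `I^{[q]}` of an ideal. -/
def frobPow (I : Ideal (MvPolynomial (Fin n) K)) (q : ℕ) : Ideal (MvPolynomial (Fin n) K) :=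
  Ideal.span ((fun a => a ^ q) '' (I : Set (MvPolynomial (Fin n) K)))

/-- The associated primes of `S/I`. -/
def Ass (I : Ideal (MvPolynomial (Fin n) K)) : Set (Ideal (MvPolynomial (Fin n) K)) :=
  associatedPrimes (MvPolynomial (Fin n) K) (MvPolynomial (Fin n) K ⧸ I)

/-- The v-number of a graded ideal. -/
def vnum (I : Ideal (MvPolynomial (Fin n) K)) : ℕ :=
  sInf {d : ℕ | ∃ f : MvPolynomial (Fin n) K, f.IsHomogeneous d ∧
    ∃ 𝔭 ∈ Ass I, I.colon (Ideal.span {f}) = 𝔭}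

/-- The local v-number `v_𝔭(I)`. -/
def vnumLocal (I 𝔭 : Ideal (MvPolynomial (Fin n) K)) : ℕ :=
  sInf {d : ℕ | ∃ f : MvPolynomial (Fin n) K, f.IsHomogeneous d ∧
    I.colon (Ideal.span {f}) = 𝔭}

/-- The invariant `α_q(I)`. -/
def alphaq (I : Ideal (MvPolynomial (Fin n) K)) (q : ℕ) : ℕ :=
  sInf {d : ℕ | ∃ f : MvPolynomial (Fin n) K, f.IsHomogeneous d ∧
    f ∈ (frobPow I q).colon I ∧ f ∉ frobPow I q}

/-- The height of an ideal: the minimal height of an associated prime. -/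
def heightI (I : Ideal (MvPolynomial (Fin n) K)) : ℕ :=
  sInf {h : ℕ | ∃ 𝔭 ∈ Ass I, ∃ h𝔭 : 𝔭.IsPrime,
    Order.height (⟨𝔭, h𝔭⟩ : PrimeSpectrum (MvPolynomial (Fin n) K)) = (h : ℕ∞)}

/-- The big height of an ideal: the maximal height of an associated prime. -/
def bightI (I : Ideal (MvPolynomial (Fin n) K)) : ℕ :=
  sSup {h : ℕ | ∃ 𝔭 ∈ Ass I, ∃ h𝔭 : 𝔭.IsPrime,
    Order.height (⟨𝔭, h𝔭⟩ : PrimeSpectrum (MvPolynomial (Fin n) K)) = (h : ℕ∞)}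

/-- A graded (homogeneous) ideal with respect to the standard grading. -/
def IsGraded (I : Ideal (MvPolynomial (Fin n) K)) : Prop :=
  Ideal.IsHomogeneous (homogeneousSubmodule (Fin n) K) I

/-- A monomial ideal. -/
def IsMonomialIdeal (I : Ideal (MvPolynomial (Fin n) K)) : Prop :=
  ∃ s : Set (Fin n →₀ ℕ), I = Ideal.span ((fun a => monomial a (1 : K)) '' s)

theorem stmt4 {K : Type*} [Field K] {n : ℕ} (p : ℕ) (hp : p.Prime) [CharP K p]
    (q : ℕ) (hq : ∃ e : ℕ, q = p ^ e) (I : Ideal (MvPolynomial (Fin n) K)) (htop : I ≠ ⊤) :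
    Ass (frobPow I q) = Ass I := by
  obtain ⟨e, rfl⟩ := hq
  haveI : Fact p.Prime := ⟨hp⟩
  apply Set.Subset.antisymm
  · exact ass_frobPow_subset p e I
  · exact ass_frobPow_superset p e I

end
end

section
/- Let S = K[x_1,…,x_n] be a standard graded polynomial ring over a field K of prime characteristic p, and let I ⊂ S be a proper nonzero graded ideal. Then α_q(I) ≤ v(I^{[q]}) for each q = p^e > 1. -/
open MvPolynomial

attribute [local instance] MvPolynomial.gradedAlgebra

noncomputable section

variable {K : Type*} [Field K] {n : ℕ}

lemma decompose_coe' (a : MvPolynomial (Fin n) K) (i : ℕ) :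
    (DirectSum.decompose (homogeneousSubmodule (Fin n) K) a i : MvPolynomial (Fin n) K)
      = homogeneousComponent i a :=
  MvPolynomial.decomposition.decompose'_apply a i

lemma comp_mul' {a f : MvPolynomial (Fin n) K} {d : ℕ} (hf : f.IsHomogeneous d) (i : ℕ) :
    homogeneousComponent (i + d) (a * f) = homogeneousComponent i a * f := by
  classical
  conv_lhs => rw [← sum_homogeneousComponent a, Finset.sum_mul, map_sum]
  have h : ∀ j ∈ Finset.range (a.totalDegree + 1),
      homogeneousComponent (i + d) (homogeneousComponent j a * f)
        = if j = i then homogeneousComponent i a * f else 0 := by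
    intro j _
    have hj : (homogeneousComponent j a * f).IsHomogeneous (j + d) :=
      (homogeneousComponent_isHomogeneous j a).mul hf
    rw [homogeneousComponent_of_mem (m := i + d) ((mem_homogeneousSubmodule _ _).2 hj)]
    by_cases hji : j = i
    · subst hji; simp
    · rw [if_neg (by omega), if_neg hji]
      
  rw [Finset.sum_congr rfl h, Finset.sum_ite_eq' (Finset.range (a.totalDegree + 1)) i]
  split
  · rfl
  · next hmem =>
    rw [homogeneousComponent_eq_zero _ _ (by simp [Finset.mem_range] at hmem; omega), zero_mul]

lemma colon_isGraded' {J : Ideal (MvPolynomial (Fin n) K)} (hJ : IsGraded J)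
    {f : MvPolynomial (Fin n) K} {d : ℕ} (hf : f.IsHomogeneous d) :
    IsGraded (J.colon (Ideal.span {f})) := by
  intro i a ha
  rw [Ideal.mem_colon_span_singleton] at ha
  have h2 := hJ (i + d) ha
  rw [decompose_coe', comp_mul' hf i] at h2
  rw [decompose_coe', Ideal.mem_colon_span_singleton]
  exact h2

lemma frobPow_le' (I : Ideal (MvPolynomial (Fin n) K)) {q : ℕ} (hq : 0 < q) :
    frobPow I q ≤ I := by
  rw [frobPow, Ideal.span_le]
  rintro _ ⟨a, ha, rfl⟩
  exact I.pow_mem_of_mem ha q hq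

lemma frobPow_isGraded' {I : Ideal (MvPolynomial (Fin n) K)} (hI : IsGraded I)
    {p : ℕ} (hp : p.Prime) [CharP K p] {e : ℕ} :
    IsGraded (frobPow I (p ^ e)) := by
  classical
  haveI : Fact p.Prime := ⟨hp⟩
  have hspan : frobPow I (p ^ e) = Ideal.span
      {g | ∃ a d, MvPolynomial.IsHomogeneous a d ∧ a ∈ I ∧ g = a ^ (p ^ e)} := by
    apply le_antisymm
    · rw [frobPow, Ideal.span_le]
      rintro _ ⟨a, ha, rfl⟩
      have hsum : (∑ i ∈ Finset.range (a.totalDegree + 1), homogeneousComponent i a) = a :=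
        sum_homogeneousComponent a
      have key : a ^ (p ^ e)
          = ∑ i ∈ Finset.range (a.totalDegree + 1), (homogeneousComponent i a) ^ (p ^ e) := by
        calc a ^ (p ^ e) = iterateFrobenius (MvPolynomial (Fin n) K) p e a := rfl
          _ = ∑ i ∈ Finset.range (a.totalDegree + 1),
                iterateFrobenius (MvPolynomial (Fin n) K) p e (homogeneousComponent i a) := by
              rw [← map_sum, hsum]
          _ = _ := by simp [iterateFrobenius_def]
      show a ^ p ^ e ∈ _
      rw [key]
      apply Ideal.sum_mem
      intro i _
      apply Ideal.subset_span
      refine ⟨homogeneousComponent i a, i, homogeneousComponent_isHomogeneous i a, ?_, rfl⟩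
      · have := hI i ha
        rwa [decompose_coe'] at this
    · rw [Ideal.span_le]
      rintro _ ⟨a, d, hhom, haI, rfl⟩
      exact Ideal.subset_span ⟨a, haI, rfl⟩
  rw [hspan]
  apply Ideal.homogeneous_span
  rintro _ ⟨a, d, hhom, haI, rfl⟩
  exact ⟨d * (p ^ e), (mem_homogeneousSubmodule _ _).2 (hhom.pow _)⟩

lemma colon_eq_annihilator' (J : Ideal (MvPolynomial (Fin n) K)) (f : MvPolynomial (Fin n) K) :
    J.colon (Ideal.span {f})
      = (Submodule.span (MvPolynomial (Fin n) K) {(Ideal.Quotient.mk J f)}).annihilator := by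
  ext a
  rw [Ideal.mem_colon_span_singleton, Submodule.mem_annihilator_span_singleton]
  constructor
  · intro h
    have e1 : a • (Ideal.Quotient.mk J f) = (Ideal.Quotient.mk J) (a * f) := rfl
    rw [e1, Ideal.Quotient.eq_zero_iff_mem]
    exact h
  · intro h
    have : (Ideal.Quotient.mk J) (a * f) = 0 := h
    rwa [Ideal.Quotient.eq_zero_iff_mem] at this

lemma exists_vnum_witness' {J : Ideal (MvPolynomial (Fin n) K)} (hJ : IsGraded J)
    (hJtop : J ≠ ⊤) :
    ∃ (d : ℕ) (f : MvPolynomial (Fin n) K), f.IsHomogeneous d ∧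
      IsAssociatedPrime (J.colon (Ideal.span {f})) (MvPolynomial (Fin n) K ⧸ J) := by
  classical
  set C : Set (Ideal (MvPolynomial (Fin n) K)) :=
    {c | ∃ (f : MvPolynomial (Fin n) K) (d : ℕ),
      f.IsHomogeneous d ∧ f ∉ J ∧ c = J.colon (Ideal.span {f})} with hC
  have hCne : C.Nonempty := by
    refine ⟨J.colon (Ideal.span {(1 : MvPolynomial (Fin n) K)}), 1, 0, isHomogeneous_one _ _, ?_, rfl⟩
    intro h; exact hJtop ((Ideal.eq_top_iff_one J).2 h)
  obtain ⟨𝔭, h𝔭C, hmax⟩ :=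
    (set_has_maximal_iff_noetherian.mpr (inferInstance : IsNoetherian _ _)) C hCne
  obtain ⟨f, d, hf, hfJ, rfl⟩ := h𝔭C
  have hne_top : J.colon (Ideal.span {f}) ≠ ⊤ := by
    intro h
    apply hfJ
    have : (1 : MvPolynomial (Fin n) K) ∈ J.colon (Ideal.span {f}) := h ▸ trivial
    rw [Ideal.mem_colon_span_singleton, one_mul] at this
    exact this
  have hprime : (J.colon (Ideal.span {f})).IsPrime := by
    apply (colon_isGraded' hJ hf).isPrime_of_homogeneous_mem_or_mem hne_top
    intro x y hx hy hxy
    by_contra hcon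
    push_neg at hcon
    obtain ⟨hxn, hyn⟩ := hcon
    obtain ⟨dy, hdy⟩ := hy
    have hyf : y * f ∉ J := by
      intro h
      exact hyn (Ideal.mem_colon_span_singleton.2 h)
    have hyfhom : (y * f).IsHomogeneous (dy + d) :=
      ((mem_homogeneousSubmodule _ _).1 hdy).mul hf
    have hmemC : J.colon (Ideal.span {y * f}) ∈ C := ⟨y * f, dy + d, hyfhom, hyf, rfl⟩
    have hle : J.colon (Ideal.span {f}) ≤ J.colon (Ideal.span {y * f}) := by
      intro a ha
      rw [Ideal.mem_colon_span_singleton] at ha ⊢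
      have : a * (y * f) = y * (a * f) := by ring
      rw [this]
      exact J.mul_mem_left y ha
    have heq : J.colon (Ideal.span {f}) = J.colon (Ideal.span {y * f}) := by
      by_contra hne
      exact hmax _ hmemC (lt_of_le_of_ne hle hne)
    apply hxn
    rw [heq, Ideal.mem_colon_span_singleton]
    have : x * (y * f) = (x * y) * f := by ring
    rw [this]
    exact Ideal.mem_colon_span_singleton.1 hxy
  exact ⟨d, f, hf, isAssociatedPrime_iff.2 ⟨hprime, Ideal.Quotient.mk J f, by rw [Submodule.bot_colon', colon_eq_annihilator']⟩⟩

theorem stmt15 {K : Type*} [Field K] {n : ℕ} (p : ℕ) (hp : p.Prime) [CharP K p]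
    (I : Ideal (MvPolynomial (Fin n) K)) (hgr : IsGraded I) (htop : I ≠ ⊤) (hbot : I ≠ ⊥)
    (q : ℕ) (hq : ∃ e : ℕ, q = p ^ e) (hq1 : 1 < q) :
    alphaq I q ≤ vnum (frobPow I q) := by
  classical
  obtain ⟨e, rfl⟩ := hq
  have hq0 : 0 < p ^ e := lt_trans Nat.zero_lt_one hq1
  have hJle : frobPow I (p ^ e) ≤ I := frobPow_le' I hq0
  have hJtop : frobPow I (p ^ e) ≠ ⊤ := fun h => htop (top_le_iff.1 (h ▸ hJle))
  have hJgr : IsGraded (frobPow I (p ^ e)) := frobPow_isGraded' hgr hp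
  obtain ⟨d, f, hf, hass⟩ := exists_vnum_witness' hJgr hJtop
  have hV : {d : ℕ | ∃ f : MvPolynomial (Fin n) K, f.IsHomogeneous d ∧
      ∃ 𝔭 ∈ Ass (frobPow I (p ^ e)),
        (frobPow I (p ^ e)).colon (Ideal.span {f}) = 𝔭}.Nonempty :=
    ⟨d, f, hf, _, hass, rfl⟩
  rw [vnum]
  have hmem := Nat.sInf_mem hV
  obtain ⟨g, hg, 𝔭, h𝔭ass, hcolon⟩ := hmem
  have hprime : 𝔭.IsPrime := (h𝔭ass : IsAssociatedPrime 𝔭 _).1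
  apply Nat.sInf_le
  refine ⟨g, hg, ?_, ?_⟩
  · rw [Submodule.mem_colon]
    intro a ha
    have haq : a ^ (p ^ e) ∈ frobPow I (p ^ e) := Ideal.subset_span ⟨a, ha, rfl⟩
    have ha𝔭 : a ∈ 𝔭 := hprime.mem_of_pow_mem _ (hcolon ▸ Ideal.mem_colon_span_singleton.2
      ((frobPow I (p ^ e)).mul_mem_right g haq))
    rw [← hcolon, Ideal.mem_colon_span_singleton] at ha𝔭
    rwa [smul_eq_mul, mul_comm]
  · intro hgJ
    have htop' : (frobPow I (p ^ e)).colon (Ideal.span {g}) = ⊤ := by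
      rw [eq_top_iff]
      intro a _
      exact Ideal.mem_colon_span_singleton.2 ((frobPow I (p ^ e)).mul_mem_left a hgJ)
    exact hprime.ne_top (hcolon ▸ htop')


end
end
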